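/- arXiv:1104.1742 — 3 statements merged into one kernel-verified Lean document; each statement's English description precedes it below -/
import Mathlib

section
/- If Z satisfies 𝔓(Z > 0) = 1, 0 < E[Z] < ∞ and E[|log Z|] < ∞, then log(1 + S·E[Z]) − E[log(1 + S·Z)] → log(E[Z]) − E[log Z] as S → ∞, and log(E[Z]) − E[log Z] ≥ 0. That is, the high-SNR capacity gap between the AWGN channel with the same average SNR and the fading channel with rate adaptation (equivalently, with optimal power and rate adaptation) equals log(E[Z]) − E[log Z], which is nonnegative for every fading distribution. -/
/-!
Since `log (1 + S x) = log S + log (S⁻¹ + x)`, the `log S` terms cancel and the gap at power `S`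
equals `log (S⁻¹ + E[Z]) - E[log (S⁻¹ + Z)]`. As `S⁻¹ → 0⁺` the first term tends to `log E[Z]`
by continuity and the second to `E[log Z]` by dominated convergence, with the `S`-independent
bound `|log Z| + Z` for `S ≥ 1`. Nonnegativity of the limit is Jensen's inequality for the
concave `log`, proved by integrating the tangent-line bound `log x ≤ x / m - 1 + log m`.
-/

open MeasureTheory Filter Topology

namespace Real

lemma abs_log_add_le {t x : ℝ} (hx : 0 < x) (ht₀ : 0 ≤ t) (ht₁ : t ≤ 1) :
    |log (t + x)| ≤ |log x| + x := by
  have hlower : log x ≤ log (t + x) := log_le_log hx (by linarith)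
  have hupper : log (t + x) ≤ x :=
    calc log (t + x) ≤ log (1 + x) := log_le_log (by linarith) (by linarith)
      _ ≤ x := by linarith [log_le_sub_one_of_pos (show 0 < 1 + x by linarith)]
  rw [abs_le]
  constructor <;> linarith [neg_abs_le (log x), abs_nonneg (log x)]

lemma log_one_add_mul {S x : ℝ} (hS : 0 < S) (hx : 0 < S⁻¹ + x) :
    log (1 + S * x) = log S + log (S⁻¹ + x) := by
  rw [← log_mul hS.ne' hx.ne', mul_add, mul_inv_cancel₀ hS.ne']

lemma log_le_div_sub_one_add_log {x m : ℝ} (hx : 0 < x) (hm : 0 < m) :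
    log x ≤ x / m - 1 + log m := by
  have := log_le_sub_one_of_pos (div_pos hx hm)
  rw [log_div hx.ne' hm.ne'] at this
  linarith

end Real

open Real

section

variable {α : Type*} [MeasurableSpace α] {μ : Measure α} {f : α → ℝ}

lemma integral_pos_of_ae_pos [NeZero μ] (hf : ∀ᵐ x ∂μ, 0 < f x) (hfi : Integrable f μ) :
    0 < ∫ x, f x ∂μ := by
  refine (integral_pos_iff_support_of_nonneg_ae (hf.mono fun _ h => h.le) hfi).2 ?_
  refine pos_iff_ne_zero.2 fun hnull => NeZero.ne μ (ae_eq_bot.1 (empty_mem_iff_bot.1 ?_))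
  filter_upwards [hf, measure_eq_zero_iff_ae_notMem.1 hnull] with x hpos hzero
  exact hpos.ne' (Function.notMem_support.1 hzero)

lemma integral_log_le_log_integral [IsProbabilityMeasure μ] (hf : ∀ᵐ x ∂μ, 0 < f x)
    (hfi : Integrable f μ) (hlog : Integrable (fun x => log (f x)) μ) :
    ∫ x, log (f x) ∂μ ≤ log (∫ x, f x ∂μ) := by
  set m := ∫ x, f x ∂μ
  have hm : 0 < m := integral_pos_of_ae_pos hf hfi
  have hlinear : Integrable (fun x => f x / m - 1) μ := (hfi.div_const m).sub (integrable_const 1)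
  calc ∫ x, log (f x) ∂μ ≤ ∫ x, (f x / m - 1 + log m) ∂μ :=
        integral_mono_ae hlog (hlinear.add (integrable_const _))
          (hf.mono fun x hx => log_le_div_sub_one_add_log hx hm)
    _ = log m := by
        rw [integral_add hlinear (integrable_const _),
          integral_sub (hfi.div_const m) (integrable_const 1), integral_div]
        simp [m, div_self hm.ne']

lemma ae_abs_log_add_le {t : ℝ} (hf : ∀ᵐ x ∂μ, 0 < f x) (ht₀ : 0 ≤ t) (ht₁ : t ≤ 1) :
    ∀ᵐ x ∂μ, ‖log (t + f x)‖ ≤ |log (f x)| + f x :=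
  hf.mono fun _ hx => abs_log_add_le hx ht₀ ht₁

lemma integrable_log_add {t : ℝ} (hf : ∀ᵐ x ∂μ, 0 < f x) (hfi : Integrable f μ)
    (hlog : Integrable (fun x => log (f x)) μ) (ht₀ : 0 ≤ t) (ht₁ : t ≤ 1) :
    Integrable (fun x => log (t + f x)) μ :=
  (hlog.abs.add hfi).mono' (measurable_log.comp_aemeasurable
    (aemeasurable_const.add hfi.aemeasurable)).aestronglyMeasurable (ae_abs_log_add_le hf ht₀ ht₁)

lemma tendsto_integral_log_add_nhdsGT_zero (hf : ∀ᵐ x ∂μ, 0 < f x) (hfi : Integrable f μ)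
    (hlog : Integrable (fun x => log (f x)) μ) :
    Tendsto (fun t => ∫ x, log (t + f x) ∂μ) (𝓝[>] 0) (𝓝 (∫ x, log (f x) ∂μ)) := by
  have hsmall : ∀ᶠ t in 𝓝[>] (0 : ℝ), 0 ≤ t ∧ t ≤ 1 :=
    eventually_of_mem (Ioc_mem_nhdsGT zero_lt_one) fun _ ht => ⟨ht.1.le, ht.2⟩
  refine tendsto_integral_filter_of_dominated_convergence (fun x => |log (f x)| + f x)
    ?_ ?_ (hlog.abs.add hfi) ?_
  · exact hsmall.mono fun _ ht => (integrable_log_add hf hfi hlog ht.1 ht.2).aestronglyMeasurable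
  · exact hsmall.mono fun _ ht => ae_abs_log_add_le hf ht.1 ht.2
  · filter_upwards [hf] with x hx
    have hcont : ContinuousWithinAt (fun t => log (t + f x)) (Set.Ioi 0) 0 :=
      ((continuous_add_const (f x)).continuousAt.log (by simpa using hx.ne')).continuousWithinAt
    simpa using hcont.tendsto

lemma integral_log_one_add_mul [IsProbabilityMeasure μ] {S : ℝ} (hf : ∀ᵐ x ∂μ, 0 < f x)
    (hfi : Integrable f μ) (hlog : Integrable (fun x => log (f x)) μ) (hS : 1 ≤ S) :
    ∫ x, log (1 + S * f x) ∂μ = log S + ∫ x, log (S⁻¹ + f x) ∂μ := by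
  have hS₀ : 0 < S := zero_lt_one.trans_le hS
  have hinv : S⁻¹ ≤ 1 := inv_le_one_of_one_le₀ hS
  calc ∫ x, log (1 + S * f x) ∂μ = ∫ x, (log S + log (S⁻¹ + f x)) ∂μ :=
        integral_congr_ae (hf.mono fun x hx => log_one_add_mul hS₀ (by positivity))
    _ = log S + ∫ x, log (S⁻¹ + f x) ∂μ := by
        rw [integral_add (integrable_const _)
          (integrable_log_add hf hfi hlog (by positivity) hinv), integral_const]
        simp

end

theorem awgn_sub_ra_gap_general
    {Ω : Type*} [MeasurableSpace Ω] (P : Measure Ω) [IsProbabilityMeasure P]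
    (Z : Ω → ℝ) (hZpos : P {ω | 0 < Z ω} = 1)
    (hZ_int : Integrable Z P)
    (hlog_int : Integrable (fun ω => |Real.log (Z ω)|) P) :
    Tendsto (fun S => Real.log (1 + S * ∫ ω, Z ω ∂P) - ∫ ω, Real.log (1 + S * Z ω) ∂P)
      atTop (𝓝 (Real.log (∫ ω, Z ω ∂P) - ∫ ω, Real.log (Z ω) ∂P)) ∧
    0 ≤ Real.log (∫ ω, Z ω ∂P) - ∫ ω, Real.log (Z ω) ∂P := by
  have hpos : ∀ᵐ ω ∂P, 0 < Z ω :=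
    (ae_iff_measure_eq (nullMeasurableSet_lt aemeasurable_const hZ_int.aemeasurable)).2
      (by rw [hZpos, measure_univ])
  have hlog : Integrable (fun ω => log (Z ω)) P :=
    (integrable_norm_iff (measurable_log.comp_aemeasurable
      hZ_int.aemeasurable).aestronglyMeasurable).1 hlog_int
  set m := ∫ ω, Z ω ∂P
  have hm : 0 < m := integral_pos_of_ae_pos hpos hZ_int
  refine ⟨?_, sub_nonneg.2 (integral_log_le_log_integral hpos hZ_int hlog)⟩
  have hlim : Tendsto (fun t => log (t + m) - ∫ ω, log (t + Z ω) ∂P) (𝓝[>] 0)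
      (𝓝 (log m - ∫ ω, log (Z ω) ∂P)) := by
    have hcont : ContinuousAt (fun t => log (t + m)) 0 :=
      (continuous_add_const m).continuousAt.log (by simpa using hm.ne')
    simpa using (hcont.continuousWithinAt (s := Set.Ioi 0)).tendsto.sub
      (tendsto_integral_log_add_nhdsGT_zero hpos hZ_int hlog)
  refine (hlim.comp tendsto_inv_atTop_nhdsGT_zero).congr' ?_
  filter_upwards [eventually_ge_atTop 1] with S hS
  have hS₀ : 0 < S := zero_lt_one.trans_le hS
  rw [Function.comp_apply, integral_log_one_add_mul hpos hZ_int hlog hS,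
    log_one_add_mul hS₀ (by positivity)]
  ring

/-- **High-SNR gap between AWGN and rate adaptation.** If `Z` satisfies `P(Z > 0) = 1`,
`0 < E[Z] < ∞` and `E[|log Z|] < ∞`, then
`log(1 + S·E[Z]) − E[log(1 + S·Z)] → log(E[Z]) − E[log Z]` as `S → ∞`, and this limit is
nonnegative. -/
theorem awgn_sub_ra_gap
    {Ω : Type*} [MeasurableSpace Ω] (P : Measure Ω) [IsProbabilityMeasure P]
    (Z : Ω → ℝ) (hZ : Measurable Z) (hZpos : P {ω | 0 < Z ω} = 1)
    (hZ_int : Integrable Z P) (hZ_mean_pos : 0 < ∫ ω, Z ω ∂P)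
    (hlog_int : Integrable (fun ω => |Real.log (Z ω)|) P) :
    Tendsto (fun S => Real.log (1 + S * ∫ ω, Z ω ∂P) - ∫ ω, Real.log (1 + S * Z ω) ∂P)
      atTop (𝓝 (Real.log (∫ ω, Z ω ∂P) - ∫ ω, Real.log (Z ω) ∂P)) ∧
    0 ≤ Real.log (∫ ω, Z ω ∂P) - ∫ ω, Real.log (Z ω) ∂P :=
  awgn_sub_ra_gap_general P Z hZpos hZ_int hlog_int
end

section
/- If Z satisfies 𝔓(Z > 0) = 1, 0 < E[Z⁻¹] < ∞ and E[|log Z|] < ∞, then E[log(1 + S·Z)] − log(1 + S/E[Z⁻¹]) → E[log Z] + log(E[Z⁻¹]) as S → ∞, and E[log Z] + log(E[Z⁻¹]) ≥ 0. That is, the high-SNR capacity gap between rate adaptation (equivalently, optimal power and rate adaptation) and channel inversion equals E[log Z] + log(E[Z⁻¹]), which is nonnegative. -/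
open MeasureTheory Filter Topology Real

/-!
Factor `1 + S Z = S Z (1 + (S Z)⁻¹)` inside the rate-adaptation capacity and
`1 + S / E[Z⁻¹] = S E[Z⁻¹]⁻¹ (1 + E[Z⁻¹] / S)` inside the channel-inversion capacity: the `log S`
terms cancel, and the remainders vanish as `S → ∞` because `0 ≤ log (1 + x) ≤ x` bounds them by
`E[Z⁻¹] / S`. The limit is nonnegative by Jensen's inequality for `exp` applied to `-log Z`:
`exp (-E[log Z]) ≤ E[Z⁻¹]`.
-/

lemma log_one_add_le_self {x : ℝ} (hx : -1 < x) : log (1 + x) ≤ x := by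
  linarith [log_le_sub_one_of_pos (show 0 < 1 + x by linarith)]

lemma log_one_add_mul_eq {S z : ℝ} (hS : 0 < S) (hz : 0 < z) :
    log (1 + S * z) = log S + log z + log (1 + S⁻¹ * z⁻¹) := by
  rw [← log_mul hS.ne' hz.ne', ← log_mul (by positivity) (by positivity)]
  congr 1
  field_simp
  ring

section Remainder

variable {Ω : Type*} [MeasurableSpace Ω] {P : Measure Ω} {Y : Ω → ℝ}

lemma integrable_log_one_add_mul (hY : 0 ≤ᵐ[P] Y) (hYi : Integrable Y P) {t : ℝ} (ht : 0 ≤ t) :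
    Integrable (fun ω => log (1 + t * Y ω)) P := by
  refine (hYi.const_mul t).mono
    ((hYi.aemeasurable.const_mul t).const_add 1).log.aestronglyMeasurable ?_
  filter_upwards [hY] with ω (hω : 0 ≤ Y ω)
  have htY : 0 ≤ t * Y ω := mul_nonneg ht hω
  rw [norm_of_nonneg (log_nonneg (by linarith)), norm_of_nonneg htY]
  exact log_one_add_le_self (by linarith)

lemma tendsto_integral_log_one_add_mul (hY : 0 ≤ᵐ[P] Y) (hYi : Integrable Y P) :
    Tendsto (fun t => ∫ ω, log (1 + t * Y ω) ∂P) (𝓝[≥] 0) (𝓝 0) := by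
  have h_upper : Tendsto (fun t => t * ∫ ω, Y ω ∂P) (𝓝[≥] 0) (𝓝 0) := by
    have h : Tendsto (fun t : ℝ => t * ∫ ω, Y ω ∂P) (𝓝 0) (𝓝 (0 * ∫ ω, Y ω ∂P)) :=
      tendsto_id.mul_const _
    simpa using h.mono_left nhdsWithin_le_nhds
  refine tendsto_of_tendsto_of_tendsto_of_le_of_le' tendsto_const_nhds h_upper ?_ ?_
  all_goals filter_upwards [self_mem_nhdsWithin] with t (ht : 0 ≤ t)
  · refine integral_nonneg_of_ae ?_
    filter_upwards [hY] with ω (hω : 0 ≤ Y ω)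
    exact log_nonneg (by nlinarith)
  · rw [← integral_const_mul]
    refine integral_mono_ae (integrable_log_one_add_mul hY hYi ht) (hYi.const_mul t) ?_
    filter_upwards [hY] with ω (hω : 0 ≤ Y ω)
    exact log_one_add_le_self (by nlinarith)

end Remainder

section Capacity

variable {Ω : Type*} [MeasurableSpace Ω] {P : Measure Ω} [IsProbabilityMeasure P] {Z : Ω → ℝ}

lemma integral_log_one_add_mul_eq (hZ : ∀ᵐ ω ∂P, 0 < Z ω)
    (hlog : Integrable (fun ω => log (Z ω)) P) (hinv : Integrable (fun ω => (Z ω)⁻¹) P)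
    {S : ℝ} (hS : 0 < S) :
    ∫ ω, log (1 + S * Z ω) ∂P =
      log S + ∫ ω, log (Z ω) ∂P + ∫ ω, log (1 + S⁻¹ * (Z ω)⁻¹) ∂P := by
  have hrem := integrable_log_one_add_mul (hZ.mono fun _ h => (inv_pos.2 h).le) hinv
    (inv_pos.2 hS).le
  rw [integral_congr_ae (hZ.mono fun ω hω => log_one_add_mul_eq hS hω),
    integral_add (f := fun ω => log S + log (Z ω)) ((integrable_const _).add hlog) hrem,
    integral_add (integrable_const _) hlog]
  simp

lemma exp_neg_integral_log_le_integral_inv (hZ : ∀ᵐ ω ∂P, 0 < Z ω)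
    (hlog : Integrable (fun ω => log (Z ω)) P) (hinv : Integrable (fun ω => (Z ω)⁻¹) P) :
    exp (-∫ ω, log (Z ω) ∂P) ≤ ∫ ω, (Z ω)⁻¹ ∂P := by
  have hexp : (fun ω => exp (-log (Z ω))) =ᵐ[P] fun ω => (Z ω)⁻¹ := by
    filter_upwards [hZ] with ω hω
    rw [exp_neg, exp_log hω]
  have hjensen := convexOn_exp.map_integral_le (f := fun ω => -log (Z ω))
    continuous_exp.continuousOn isClosed_univ (Eventually.of_forall fun _ => Set.mem_univ _)
    hlog.neg ((integrable_congr hexp).2 hinv)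
  rwa [integral_neg, integral_congr_ae hexp] at hjensen

end Capacity

theorem ra_sub_ci_gap_general
    {Ω : Type*} [MeasurableSpace Ω] (P : Measure Ω) [IsProbabilityMeasure P]
    (Z : Ω → ℝ) (hZpos : P {ω | 0 < Z ω} = 1)
    (hinv_int : Integrable (fun ω => (Z ω)⁻¹) P)
    (hinv_pos : 0 < ∫ ω, (Z ω)⁻¹ ∂P)
    (hlog_int : Integrable (fun ω => |Real.log (Z ω)|) P) :
    Tendsto (fun S =>
        (∫ ω, Real.log (1 + S * Z ω) ∂P) - Real.log (1 + S / ∫ ω, (Z ω)⁻¹ ∂P))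
      atTop (𝓝 ((∫ ω, Real.log (Z ω) ∂P) + Real.log (∫ ω, (Z ω)⁻¹ ∂P))) ∧
    0 ≤ (∫ ω, Real.log (Z ω) ∂P) + Real.log (∫ ω, (Z ω)⁻¹ ∂P) := by
  set m := ∫ ω, (Z ω)⁻¹ ∂P
  have hZ_meas : AEMeasurable Z P := by simpa [Pi.inv_def] using hinv_int.aemeasurable.inv
  have hZ_ae : ∀ᵐ ω ∂P, 0 < Z ω :=
    (ae_iff_measure_eq (nullMeasurableSet_lt aemeasurable_const hZ_meas)).2
      (by rw [hZpos, measure_univ])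
  have hlog : Integrable (fun ω => log (Z ω)) P :=
    (integrable_norm_iff hZ_meas.log.aestronglyMeasurable).1 (by simpa only [norm_eq_abs])
  refine ⟨?_, ?_⟩
  · have h_ra : Tendsto (fun S : ℝ => ∫ ω, log (1 + S⁻¹ * (Z ω)⁻¹) ∂P) atTop (𝓝 0) :=
      (tendsto_integral_log_one_add_mul (hZ_ae.mono fun _ h => (inv_pos.2 h).le) hinv_int).comp
        (tendsto_inv_atTop_nhdsGT_zero.mono_right (nhdsWithin_mono _ Set.Ioi_subset_Ici_self))
    have h_ci : Tendsto (fun S : ℝ => log (1 + S⁻¹ * m)) atTop (𝓝 0) := by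
      simpa using ((tendsto_inv_atTop_zero.mul_const m).const_add 1).log (by simp)
    have h_lim : Tendsto (fun S : ℝ => ∫ ω, log (Z ω) ∂P + log m +
        ((∫ ω, log (1 + S⁻¹ * (Z ω)⁻¹) ∂P) - log (1 + S⁻¹ * m)))
        atTop (𝓝 (∫ ω, log (Z ω) ∂P + log m)) := by
      simpa using tendsto_const_nhds.add (h_ra.sub h_ci)
    refine h_lim.congr' ?_
    filter_upwards [eventually_gt_atTop 0] with S hS
    rw [integral_log_one_add_mul_eq hZ_ae hlog hinv_int hS, div_eq_mul_inv,
      log_one_add_mul_eq hS (inv_pos.2 hinv_pos), inv_inv, log_inv]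
    ring
  · linarith [(le_log_iff_exp_le hinv_pos).2
      (exp_neg_integral_log_le_integral_inv hZ_ae hlog hinv_int)]

/-- **High-SNR gap between rate adaptation and channel inversion.** If `Z` satisfies
`P(Z > 0) = 1`, `0 < E[Z⁻¹] < ∞` and `E[|log Z|] < ∞`, then
`E[log(1 + S·Z)] − log(1 + S/E[Z⁻¹]) → E[log Z] + log(E[Z⁻¹])` as `S → ∞`, and this limit is
nonnegative. -/
theorem ra_sub_ci_gap
    {Ω : Type*} [MeasurableSpace Ω] (P : Measure Ω) [IsProbabilityMeasure P]
    (Z : Ω → ℝ) (hZ : Measurable Z) (hZpos : P {ω | 0 < Z ω} = 1)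
    (hinv_int : Integrable (fun ω => (Z ω)⁻¹) P)
    (hinv_pos : 0 < ∫ ω, (Z ω)⁻¹ ∂P)
    (hlog_int : Integrable (fun ω => |Real.log (Z ω)|) P) :
    Tendsto (fun S =>
        (∫ ω, Real.log (1 + S * Z ω) ∂P) - Real.log (1 + S / ∫ ω, (Z ω)⁻¹ ∂P))
      atTop (𝓝 ((∫ ω, Real.log (Z ω) ∂P) + Real.log (∫ ω, (Z ω)⁻¹ ∂P))) ∧
    0 ≤ (∫ ω, Real.log (Z ω) ∂P) + Real.log (∫ ω, (Z ω)⁻¹ ∂P) :=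
  ra_sub_ci_gap_general P Z hZpos hinv_int hinv_pos hlog_int
end

section
/- For integer K ≥ 2, let Z_K have the density f_K(z) = K·e^{−z}·(1 − e^{−z})^{K−1} on (0,∞) (the maximum of K i.i.d. unit-mean exponential random variables). Then E[Z_K] = ∑_{k=1}^K 1/k, and log(E[Z_K]·E[Z_K⁻¹]) → 0 as K → ∞; that is, the high-SNR capacity gap between the AWGN channel and channel inversion vanishes as the number of users grows. -/
/-!
`E[Z_K] = H_K` because `z ((1 - e^{-z})^K - 1) + ∑_{j<K} (1 - e^{-z})^{j+1} / (j+1)` is a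
primitive of `z f_K(z)`: its derivative collapses by the geometric sum
`e^{-z} ∑_{j<K} (1 - e^{-z})^j = 1 - (1 - e^{-z})^K`.

For the gap, `E[Z] E[Z⁻¹] ≥ 1` holds for every positive random variable (Cauchy–Schwarz).
Conversely, with `L = log K`, splitting `E[Z_K⁻¹]` at `a = L - 2 log L` gives
`E[Z_K⁻¹] ≤ 1/a + K a (1 - e^{-a})^{K-2}`, and as `K e^{-a} = L²` the second term is at most
`L / K`. Together with `H_K ≤ 1 + L` the product is at most
`(1 + L) (1 / (L - 2 log L) + L e^{-L}) → 1`.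
-/

open MeasureTheory Filter Topology Real Set

theorem one_le_integral_mul_mul_integral_inv_mul {α : Type*} [MeasurableSpace α]
    {μ : Measure α} {f g : α → ℝ} (hf : 0 ≤ᵐ[μ] f) (hg : ∀ᵐ x ∂μ, 0 < g x)
    (hf1 : ∫ x, f x ∂μ = 1) (hgf : Integrable (fun x => g x * f x) μ)
    (hgf' : Integrable (fun x => (g x)⁻¹ * f x) μ) :
    1 ≤ (∫ x, g x * f x ∂μ) * ∫ x, (g x)⁻¹ * f x ∂μ := by
  set A := ∫ x, g x * f x ∂μ
  set B := ∫ x, (g x)⁻¹ * f x ∂μ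
  have hfi : Integrable f μ := .of_integral_ne_zero (by simp [hf1])
  -- `(1 - t g)² ≥ 0` gives `2 t - t² g ≤ g⁻¹` pointwise
  have key : ∀ t : ℝ, 2 * t - t ^ 2 * A ≤ B := by
    intro t
    have hexpand : (fun x => (2 * t - t ^ 2 * g x) * f x) =
        fun x => 2 * t * f x - t ^ 2 * (g x * f x) := by
      ext x
      ring
    have hint : Integrable (fun x => 2 * t * f x - t ^ 2 * (g x * f x)) μ :=
      (hfi.const_mul _).sub (hgf.const_mul _)
    have hlin : ∫ x, (2 * t - t ^ 2 * g x) * f x ∂μ = 2 * t - t ^ 2 * A := by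
      rw [hexpand, integral_sub (hfi.const_mul _) (hgf.const_mul _), integral_const_mul,
        integral_const_mul, hf1, mul_one]
    rw [← hlin]
    refine integral_mono_ae (hexpand ▸ hint) hgf' ?_
    filter_upwards [hf, hg] with x hfx hgx
    refine mul_le_mul_of_nonneg_right ?_ hfx
    have : (g x)⁻¹ - (2 * t - t ^ 2 * g x) = (t * g x - 1) ^ 2 / g x := by
      field_simp
      ring
    linarith [this ▸ div_nonneg (sq_nonneg (t * g x - 1)) hgx.le]
  have hA : 0 < A := by
    by_contra! hA
    nlinarith [key (|B| + 1), le_abs_self B, abs_nonneg B]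
  calc 1 = A * (2 * A⁻¹ - A⁻¹ ^ 2 * A) := by field_simp; ring
    _ ≤ A * B := mul_le_mul_of_nonneg_left (key _) hA.le

theorem setIntegral_Ioi_inv_mul_le {f : ℝ → ℝ} {a : ℝ} (ha : 0 < a)
    (hf : ∀ z ∈ Ioi (0 : ℝ), 0 ≤ f z) (hf1 : ∫ z in Ioi 0, f z = 1)
    (hint : IntegrableOn (fun z => z⁻¹ * f z) (Ioi 0)) :
    ∫ z in Ioi 0, z⁻¹ * f z ≤ (∫ z in Ioc 0 a, z⁻¹ * f z) + a⁻¹ := by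
  have hfi : IntegrableOn f (Ioi 0) := .of_integral_ne_zero (by simp [hf1])
  have hsub : Ioi a ⊆ Ioi (0 : ℝ) := Ioi_subset_Ioi ha.le
  rw [← Ioc_union_Ioi_eq_Ioi ha.le, setIntegral_union (Ioc_disjoint_Ioi le_rfl) measurableSet_Ioi
    (hint.mono_set Ioc_subset_Ioi_self) (hint.mono_set hsub)]
  gcongr
  calc ∫ z in Ioi a, z⁻¹ * f z
      ≤ ∫ z in Ioi a, a⁻¹ * f z :=
        setIntegral_mono_on (hint.mono_set hsub) ((hfi.mono_set hsub).const_mul _)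
          measurableSet_Ioi fun z hz =>
            mul_le_mul_of_nonneg_right (inv_anti₀ ha hz.le) (hf z (hsub hz))
    _ = a⁻¹ * ∫ z in Ioi a, f z := integral_const_mul _ _
    _ ≤ a⁻¹ * ∫ z in Ioi 0, f z :=
        mul_le_mul_of_nonneg_left (setIntegral_mono_set hfi ((ae_restrict_iff'
          measurableSet_Ioi).2 (Eventually.of_forall hf)) hsub.eventuallyLE) (inv_nonneg.2 ha.le)
    _ = a⁻¹ := by rw [hf1, mul_one]

theorem integrableOn_Ioi_of_norm_le_pow_mul_exp_neg {g : ℝ → ℝ} (hg : Measurable g) (n : ℕ)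
    (c : ℝ) (hle : ∀ z ∈ Ioi (0 : ℝ), ‖g z‖ ≤ c * (z ^ n * exp (-z))) :
    IntegrableOn g (Ioi 0) := by
  have hint : IntegrableOn (fun z : ℝ => z ^ n * exp (-z)) (Ioi 0) := by
    refine (GammaIntegral_convergent (s := n + 1) (by positivity)).congr_fun
      (fun z _ => ?_) measurableSet_Ioi
    dsimp only
    rw [add_sub_cancel_right, rpow_natCast, mul_comm]
  exact (hint.const_mul c).mono' hg.aestronglyMeasurable
    ((ae_restrict_iff' measurableSet_Ioi).2 (Eventually.of_forall hle))

theorem two_mul_log_lt_self {x : ℝ} (hx : 0 < x) : 2 * log x < x := by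
  rw [← lt_div_iff₀' two_pos, log_lt_iff_lt_exp hx]
  nlinarith [quadratic_le_exp_of_nonneg (x := x / 2) (by positivity)]

lemma one_sub_exp_neg_nonneg {z : ℝ} (hz : 0 ≤ z) : 0 ≤ 1 - exp (-z) := by
  linarith [exp_le_one_iff.2 (neg_nonpos.2 hz)]

lemma one_sub_exp_neg_le_one (z : ℝ) : 1 - exp (-z) ≤ 1 := by
  linarith [exp_pos (-z)]

lemma one_sub_exp_neg_le_self (z : ℝ) : 1 - exp (-z) ≤ z := by
  linarith [one_sub_le_exp_neg z]

noncomputable section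

def maxExpPDF (K : ℕ) (z : ℝ) : ℝ := K * exp (-z) * (1 - exp (-z)) ^ (K - 1)

def maxExpMean (K : ℕ) : ℝ := ∫ z in Ioi 0, z * maxExpPDF K z

def maxExpInvMean (K : ℕ) : ℝ := ∫ z in Ioi 0, z⁻¹ * maxExpPDF K z

def gapBound (L : ℝ) : ℝ := (1 + L) * ((L - 2 * log L)⁻¹ + L * exp (-L))

end

lemma maxExpPDF_succ (n : ℕ) (z : ℝ) :
    maxExpPDF (n + 1) z = (n + 1) * exp (-z) * (1 - exp (-z)) ^ n := by
  simp [maxExpPDF]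

lemma continuous_maxExpPDF (K : ℕ) : Continuous (maxExpPDF K) := by
  unfold maxExpPDF
  fun_prop

lemma maxExpPDF_nonneg (K : ℕ) {z : ℝ} (hz : 0 ≤ z) : 0 ≤ maxExpPDF K z := by
  have hu := one_sub_exp_neg_nonneg hz
  unfold maxExpPDF
  positivity

lemma maxExpPDF_le (K : ℕ) {z : ℝ} (hz : 0 ≤ z) : maxExpPDF K z ≤ K * exp (-z) := by
  unfold maxExpPDF
  exact mul_le_of_le_one_right (by positivity)
    (pow_le_one₀ (one_sub_exp_neg_nonneg hz) (one_sub_exp_neg_le_one z))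

lemma inv_mul_maxExpPDF_le {K : ℕ} (hK : 2 ≤ K) {z : ℝ} (hz : 0 < z) :
    z⁻¹ * maxExpPDF K z ≤ K * exp (-z) * (1 - exp (-z)) ^ (K - 2) := by
  obtain ⟨n, rfl⟩ : ∃ n, K = n + 2 := ⟨K - 2, by omega⟩
  have hu := one_sub_exp_neg_nonneg hz.le
  have hratio : (1 - exp (-z)) * z⁻¹ ≤ 1 := by
    rw [← div_eq_mul_inv, div_le_one hz]
    exact one_sub_exp_neg_le_self z
  calc z⁻¹ * maxExpPDF (n + 2) z
      = (n + 2 : ℕ) * exp (-z) * (1 - exp (-z)) ^ n * ((1 - exp (-z)) * z⁻¹) := by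
        simp only [maxExpPDF, show n + 2 - 1 = n + 1 by omega]
        ring
    _ ≤ (n + 2 : ℕ) * exp (-z) * (1 - exp (-z)) ^ n :=
        mul_le_of_le_one_right (by positivity) hratio

lemma integrableOn_maxExpPDF (K : ℕ) : IntegrableOn (maxExpPDF K) (Ioi 0) :=
  integrableOn_Ioi_of_norm_le_pow_mul_exp_neg (continuous_maxExpPDF K).measurable 0 K
    fun z hz => by
      rw [Real.norm_of_nonneg (maxExpPDF_nonneg K (le_of_lt hz)), pow_zero, one_mul]
      exact maxExpPDF_le K (le_of_lt hz)

lemma integrableOn_mul_maxExpPDF (K : ℕ) :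
    IntegrableOn (fun z => z * maxExpPDF K z) (Ioi 0) :=
  integrableOn_Ioi_of_norm_le_pow_mul_exp_neg
    (measurable_id.mul (continuous_maxExpPDF K).measurable) 1 K fun z hz => by
      have hz : 0 < z := hz
      rw [Real.norm_of_nonneg (mul_nonneg hz.le (maxExpPDF_nonneg K hz.le)), pow_one]
      nlinarith [maxExpPDF_le K hz.le]

lemma integrableOn_inv_mul_maxExpPDF {K : ℕ} (hK : 2 ≤ K) :
    IntegrableOn (fun z => z⁻¹ * maxExpPDF K z) (Ioi 0) :=
  integrableOn_Ioi_of_norm_le_pow_mul_exp_neg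
    (measurable_inv.mul (continuous_maxExpPDF K).measurable) 0 K fun z hz => by
      have hz : 0 < z := hz
      rw [Real.norm_of_nonneg (mul_nonneg (inv_nonneg.2 hz.le) (maxExpPDF_nonneg K hz.le)),
        pow_zero, one_mul]
      refine (inv_mul_maxExpPDF_le hK hz).trans (mul_le_of_le_one_right (by positivity) ?_)
      exact pow_le_one₀ (one_sub_exp_neg_nonneg hz.le) (one_sub_exp_neg_le_one z)

lemma hasDerivAt_one_sub_exp_neg_pow (K : ℕ) (z : ℝ) :
    HasDerivAt (fun z => (1 - exp (-z)) ^ K) (maxExpPDF K z) z := by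
  refine (((hasDerivAt_neg z).exp.const_sub 1).pow K).congr_deriv ?_
  simp only [maxExpPDF]
  ring

lemma tendsto_one_sub_exp_neg_atTop : Tendsto (fun z => 1 - exp (-z)) atTop (𝓝 1) := by
  simpa using tendsto_exp_neg_atTop_nhds_zero.const_sub 1

lemma integral_maxExpPDF {K : ℕ} (hK : K ≠ 0) : ∫ z in Ioi 0, maxExpPDF K z = 1 := by
  rw [integral_Ioi_of_hasDerivAt_of_tendsto' (fun z _ => hasDerivAt_one_sub_exp_neg_pow K z)
    (integrableOn_maxExpPDF K) (by simpa using tendsto_one_sub_exp_neg_atTop.pow K),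
    neg_zero, exp_zero, sub_self, zero_pow hK, sub_zero]

lemma tendsto_mul_one_sub_exp_neg_pow_sub_one (K : ℕ) :
    Tendsto (fun z => z * ((1 - exp (-z)) ^ K - 1)) atTop (𝓝 0) := by
  have hbound : Tendsto (fun z => -(K * (z ^ 1 * exp (-z)))) atTop (𝓝 0) := by
    simpa using ((tendsto_pow_mul_exp_neg_atTop_nhds_zero 1).const_mul (K : ℝ)).neg
  refine tendsto_of_tendsto_of_tendsto_of_le_of_le' hbound tendsto_const_nhds ?_ ?_
  all_goals filter_upwards [eventually_ge_atTop 0] with z hz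
  · -- Bernoulli: `1 - K e^{-z} ≤ (1 - e^{-z})^K`
    have hbern := one_add_mul_le_pow (a := -exp (-z))
      (by linarith [exp_le_one_iff.2 (neg_nonpos.2 hz)]) K
    rw [← sub_eq_add_neg] at hbern
    nlinarith [mul_le_mul_of_nonneg_left hbern hz]
  · exact mul_nonpos_of_nonneg_of_nonpos hz (by
      linarith [pow_le_one₀ (one_sub_exp_neg_nonneg hz) (one_sub_exp_neg_le_one z) (n := K)])

lemma hasDerivAt_maxExpMean_primitive (K : ℕ) (z : ℝ) :
    HasDerivAt (fun z => z * ((1 - exp (-z)) ^ K - 1) +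
      ∑ j ∈ Finset.range K, (1 - exp (-z)) ^ (j + 1) / (j + 1)) (z * maxExpPDF K z) z := by
  have hsum := HasDerivAt.fun_sum (u := Finset.range K) fun j _ =>
    (hasDerivAt_one_sub_exp_neg_pow (j + 1) z).div_const ((j : ℝ) + 1)
  refine (((hasDerivAt_id z).mul ((hasDerivAt_one_sub_exp_neg_pow K z).sub_const 1)).add
    hsum).congr_deriv ?_
  have hgeom := mul_neg_geom_sum (1 - exp (-z)) K
  simp only [maxExpPDF_succ, sub_sub_cancel] at hgeom ⊢
  have hterm : ∀ j ∈ Finset.range K, ((j : ℝ) + 1) * exp (-z) * (1 - exp (-z)) ^ j / (j + 1) =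
      exp (-z) * (1 - exp (-z)) ^ j := fun j _ => by field_simp
  rw [Finset.sum_congr rfl hterm, ← Finset.mul_sum, hgeom, id]
  ring

theorem maxExpMean_eq_harmonic (K : ℕ) : maxExpMean K = harmonic K := by
  have hlim := (tendsto_mul_one_sub_exp_neg_pow_sub_one K).add <| tendsto_finsetSum
    (Finset.range K) fun j _ =>
      (tendsto_one_sub_exp_neg_atTop.pow (j + 1)).div_const ((j : ℝ) + 1)
  rw [maxExpMean, integral_Ioi_of_hasDerivAt_of_tendsto'
    (fun z _ => hasDerivAt_maxExpMean_primitive K z) (integrableOn_mul_maxExpPDF K) hlim]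
  simp [harmonic]

lemma setIntegral_Ioc_inv_mul_maxExpPDF_le {K : ℕ} (hK : 2 ≤ K) {a : ℝ} (ha : 0 ≤ a) :
    ∫ z in Ioc 0 a, z⁻¹ * maxExpPDF K z ≤ K * (1 - exp (-a)) ^ (K - 2) * a := by
  have hle : ∀ z ∈ Ioc 0 a, ‖z⁻¹ * maxExpPDF K z‖ ≤ K * (1 - exp (-a)) ^ (K - 2) := by
    rintro z ⟨hz, hza⟩
    have hu := one_sub_exp_neg_nonneg hz.le
    rw [Real.norm_of_nonneg (mul_nonneg (inv_nonneg.2 hz.le) (maxExpPDF_nonneg K hz.le))]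
    calc z⁻¹ * maxExpPDF K z ≤ K * exp (-z) * (1 - exp (-z)) ^ (K - 2) :=
          inv_mul_maxExpPDF_le hK hz
      _ ≤ K * 1 * (1 - exp (-a)) ^ (K - 2) := by
          gcongr
          exact exp_le_one_iff.2 (neg_nonpos.2 hz.le)
      _ = K * (1 - exp (-a)) ^ (K - 2) := by rw [mul_one]
  calc ∫ z in Ioc 0 a, z⁻¹ * maxExpPDF K z
      ≤ ‖∫ z in Ioc 0 a, z⁻¹ * maxExpPDF K z‖ := le_norm_self _
    _ ≤ K * (1 - exp (-a)) ^ (K - 2) * volume.real (Ioc 0 a) :=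
        norm_setIntegral_le_of_norm_le_const measure_Ioc_lt_top hle
    _ = K * (1 - exp (-a)) ^ (K - 2) * a := by rw [volume_real_Ioc_of_le ha, sub_zero]

lemma maxExpInvMean_le {K : ℕ} (hK : 2 ≤ K) {a : ℝ} (ha : 0 < a) :
    maxExpInvMean K ≤ a⁻¹ + K * (1 - exp (-a)) ^ (K - 2) * a := by
  calc maxExpInvMean K ≤ (∫ z in Ioc 0 a, z⁻¹ * maxExpPDF K z) + a⁻¹ :=
        setIntegral_Ioi_inv_mul_le ha (fun z hz => maxExpPDF_nonneg K (le_of_lt hz))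
          (integral_maxExpPDF (by omega)) (integrableOn_inv_mul_maxExpPDF hK)
    _ ≤ a⁻¹ + K * (1 - exp (-a)) ^ (K - 2) * a := by
        linarith [setIntegral_Ioc_inv_mul_maxExpPDF_le hK ha.le]

lemma one_le_maxExpMean_mul_maxExpInvMean {K : ℕ} (hK : 2 ≤ K) :
    1 ≤ maxExpMean K * maxExpInvMean K :=
  one_le_integral_mul_mul_integral_inv_mul
    ((ae_restrict_iff' measurableSet_Ioi).2 (Eventually.of_forall fun z hz =>
      maxExpPDF_nonneg K (le_of_lt hz)))
    ((ae_restrict_iff' measurableSet_Ioi).2 (Eventually.of_forall fun _ hz => hz))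
    (integral_maxExpPDF (by omega)) (integrableOn_mul_maxExpPDF K)
    (integrableOn_inv_mul_maxExpPDF hK)

lemma maxExpInvMean_le_of_four_le_log {K : ℕ} (hL : 4 ≤ log K) :
    maxExpInvMean K ≤ (log K - 2 * log (log K))⁻¹ + log K * exp (-log K) := by
  set L := log K
  have hK0 : (0 : ℝ) < K := Nat.cast_pos.2 (Nat.pos_of_ne_zero fun h => by
    simp only [L, h, Nat.cast_zero, log_zero] at hL; norm_num at hL)
  have hKL : (K : ℝ) = exp L := (exp_log hK0).symm
  have hK4 : (4 : ℝ) ≤ K := by linarith [add_one_le_exp L]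
  have hK2 : 2 ≤ K := by exact_mod_cast (by linarith : (2 : ℝ) ≤ K)
  set a := L - 2 * log L
  have ha : 0 < a := sub_pos.2 (two_mul_log_lt_self (by linarith))
  have haL : a ≤ L := by linarith [log_nonneg (by linarith : (1 : ℝ) ≤ L)]
  -- the cut-off `a` is chosen so that `K e^{-a} = L²`
  have hexp : exp (-a) = L ^ 2 / K := by
    rw [show -a = log L + log L - L by ring, exp_sub, exp_add, exp_log (by linarith), ← hKL]
    ring
  have hpow : (1 - exp (-a)) ^ (K - 2) ≤ exp (-(2 * L)) :=
    calc (1 - exp (-a)) ^ (K - 2) ≤ exp (-exp (-a)) ^ (K - 2) :=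
          pow_le_pow_left₀ (one_sub_exp_neg_nonneg ha.le) (one_sub_le_exp_neg _) _
      _ = exp (-((K - 2 : ℕ) * exp (-a))) := by rw [← exp_nat_mul, mul_neg]
      _ ≤ exp (-(2 * L)) := by
          rw [exp_le_exp, neg_le_neg_iff, Nat.cast_sub hK2, hexp, Nat.cast_ofNat,
            mul_div_assoc', le_div_iff₀ hK0]
          have : 2 * (K : ℝ) ≤ (K - 2) * L := by
            nlinarith [mul_le_mul_of_nonneg_right hK4 (by linarith : (0 : ℝ) ≤ L - 2)]
          nlinarith [mul_le_mul_of_nonneg_left this (by linarith : (0 : ℝ) ≤ L)]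
  calc maxExpInvMean K ≤ a⁻¹ + K * (1 - exp (-a)) ^ (K - 2) * a := maxExpInvMean_le hK2 ha
    _ ≤ a⁻¹ + K * exp (-(2 * L)) * L := by gcongr
    _ = a⁻¹ + L * exp (-L) := by
        rw [hKL, ← exp_add]
        ring_nf

lemma maxExpMean_mul_maxExpInvMean_le_gapBound {K : ℕ} (hL : 4 ≤ log K) :
    maxExpMean K * maxExpInvMean K ≤ gapBound (log K) := by
  have hmean : maxExpMean K ≤ 1 + log K := by
    rw [maxExpMean_eq_harmonic]
    exact_mod_cast harmonic_le_one_add_log K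
  have hinv_nonneg : 0 ≤ maxExpInvMean K := setIntegral_nonneg measurableSet_Ioi fun z hz =>
    mul_nonneg (inv_nonneg.2 (le_of_lt hz)) (maxExpPDF_nonneg K (le_of_lt hz))
  exact mul_le_mul hmean (maxExpInvMean_le_of_four_le_log hL) hinv_nonneg (by linarith)

lemma tendsto_gapBound : Tendsto gapBound atTop (𝓝 1) := by
  have hratio : Tendsto (fun L => (1 + L) * (L - 2 * log L)⁻¹) atTop (𝓝 1) := by
    have hlog : Tendsto (fun L => log L / L) atTop (𝓝 0) :=
      isLittleO_log_id_atTop.tendsto_div_nhds_zero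
    have hquot : Tendsto (fun L => (L⁻¹ + 1) / (1 - 2 * (log L / L))) atTop (𝓝 1) := by
      simpa [Pi.div_def] using (tendsto_inv_atTop_zero.add_const 1).div
        (tendsto_const_nhds (x := (1 : ℝ)).sub (hlog.const_mul 2)) (by norm_num)
    refine hquot.congr' ?_
    filter_upwards [eventually_gt_atTop 0] with L hL
    have := two_mul_log_lt_self hL
    field_simp
  have hdecay : Tendsto (fun L => (1 + L) * (L * exp (-L))) atTop (𝓝 0) := by
    simpa using ((tendsto_pow_mul_exp_neg_atTop_nhds_zero 1).add
      (tendsto_pow_mul_exp_neg_atTop_nhds_zero 2)).congr fun L => by ring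
  have hsum := hratio.add hdecay
  rw [add_zero] at hsum
  exact hsum.congr fun L => by rw [gapBound, mul_add]

lemma tendsto_maxExpMean_mul_maxExpInvMean :
    Tendsto (fun K : ℕ => maxExpMean K * maxExpInvMean K) atTop (𝓝 1) := by
  have hlog : Tendsto (fun K : ℕ => log K) atTop atTop :=
    tendsto_log_atTop.comp tendsto_natCast_atTop_atTop
  refine tendsto_of_tendsto_of_tendsto_of_le_of_le' tendsto_const_nhds
    (tendsto_gapBound.comp hlog) ?_ ?_
  · filter_upwards [eventually_ge_atTop 2] with K hK
    exact one_le_maxExpMean_mul_maxExpInvMean hK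
  · filter_upwards [hlog.eventually_ge_atTop 4] with K hK
    exact maxExpMean_mul_maxExpInvMean_le_gapBound hK

/-- **AWGN–CI gap vanishes with multi-user diversity.** For integer `K ≥ 2`, let `Z_K` have
the density `f_K(z) = K·e^{−z}·(1 − e^{−z})^{K−1}` on `(0,∞)` (the maximum of `K` i.i.d.
unit-mean exponentials). Then `E[Z_K] = ∑_{k=1}^K 1/k`, and the high-SNR gap
`log(E[Z_K]·E[Z_K⁻¹])` between the AWGN channel and channel inversion tends to `0` as
`K → ∞`. -/
theorem awgn_ci_gap_multiuser :
    (∀ K : ℕ, 2 ≤ K →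
      ∫ z in Set.Ioi (0:ℝ),
          z * ((K : ℝ) * Real.exp (-z) * (1 - Real.exp (-z)) ^ (K - 1)) =
        ∑ k ∈ Finset.Icc 1 K, (1:ℝ) / k) ∧
    Tendsto (fun K : ℕ =>
        Real.log ((∫ z in Set.Ioi (0:ℝ),
            z * ((K : ℝ) * Real.exp (-z) * (1 - Real.exp (-z)) ^ (K - 1))) *
          (∫ z in Set.Ioi (0:ℝ),
            z⁻¹ * ((K : ℝ) * Real.exp (-z) * (1 - Real.exp (-z)) ^ (K - 1)))))
      atTop (𝓝 0) := by
  refine ⟨fun K _ => ?_, ?_⟩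
  · change maxExpMean K = _
    rw [maxExpMean_eq_harmonic, harmonic_eq_sum_Icc]
    push_cast
    simp only [one_div]
  · have := tendsto_maxExpMean_mul_maxExpInvMean.log one_ne_zero
    rwa [log_one] at this
end
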